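/- For any density matrix ρ supported on the 3-dimensional code span{|001⟩, |010⟩, |100⟩} ⊂ (ℂ²)^⊗3, three independent uses of the amplitude damping channel with damping rate γ give (E_AD)^⊗3(ρ) = (1−γ)ρ + γ|000⟩⟨000|. -/

import Mathlib

/-!
A Kraus operator `K_s` of three amplitude-damping channels sends a weight-one ket `|x⟩` to
`√(1-γ) |x⟩` if `s` damps no qubit, to `√γ |000⟩` if `s` damps exactly the excited qubit
of `x`, and to `0` otherwise. Hence on the code the channel acts as
`|x⟩⟨y| ↦ (1-γ) |x⟩⟨y| + δ_{xy} γ |000⟩⟨000|`, and expanding a supported `ρ` as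
`∑ ⟨x|ρ|y⟩ |x⟩⟨y|` gives `(1-γ) ρ + γ (tr ρ) |000⟩⟨000|` by linearity.
-/

open Matrix Kronecker ComplexOrder

noncomputable def A0 (γ : ℝ) : Matrix (Fin 2) (Fin 2) ℂ :=
  !![1, 0; 0, (Real.sqrt (1 - γ) : ℂ)]

noncomputable def A1 (γ : ℝ) : Matrix (Fin 2) (Fin 2) ℂ :=
  !![0, (Real.sqrt γ : ℂ); 0, 0]

def e (a : Fin 2) : Fin 2 → ℂ := fun i => if i = a then 1 else 0

abbrev Q3 := Fin 2 × Fin 2 × Fin 2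

/-- |abc⟩ = e_a ⊗ e_b ⊗ e_c. -/
def ket3 (a b c : Fin 2) : Q3 → ℂ := fun p => e a p.1 * e b p.2.1 * e c p.2.2

/-- projection onto span{|001⟩, |010⟩, |100⟩}. -/
noncomputable def P3 : Matrix Q3 Q3 ℂ :=
  vecMulVec (ket3 0 0 1) (star (ket3 0 0 1)) + vecMulVec (ket3 0 1 0) (star (ket3 0 1 0)) +
    vecMulVec (ket3 1 0 0) (star (ket3 1 0 0))

/-- the Kraus operator with A1 at positions where s is true and A0 elsewhere. -/
noncomputable def Kr (γ : ℝ) (s : Fin 3 → Bool) : Matrix Q3 Q3 ℂ :=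
  (if s 0 then A1 γ else A0 γ) ⊗ₖ ((if s 1 then A1 γ else A0 γ) ⊗ₖ (if s 2 then A1 γ else A0 γ))

/-- three uses of the amplitude damping channel. -/
noncomputable def EAD3 (γ : ℝ) (ρ : Matrix Q3 Q3 ℂ) : Matrix Q3 Q3 ℂ :=
  ∑ s : Fin 3 → Bool, Kr γ s * ρ * (Kr γ s)ᴴ

section Tensor

variable {R m n : Type*} [CommSemiring R]

def tensorVec (u : m → R) (v : n → R) : m × n → R := fun p => u p.1 * v p.2

@[simp] lemma tensorVec_smul_left {S : Type*} [SMul S R] [IsScalarTower S R R] (r : S)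
    (u : m → R) (v : n → R) : tensorVec (r • u) v = r • tensorVec u v := by
  ext p; simp [tensorVec, smul_mul_assoc]

@[simp] lemma tensorVec_smul_right {S : Type*} [SMul S R] [SMulCommClass S R R] (r : S)
    (u : m → R) (v : n → R) : tensorVec u (r • v) = r • tensorVec u v := by
  ext p; simp [tensorVec, mul_smul_comm]

@[simp] lemma tensorVec_zero_left (v : n → R) : tensorVec (0 : m → R) v = 0 := by
  ext p; simp [tensorVec]

@[simp] lemma tensorVec_zero_right (u : m → R) : tensorVec u (0 : n → R) = 0 := by
  ext p; simp [tensorVec]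

lemma kroneckerMap_mulVec_tensorVec [Fintype m] [Fintype n] {m' n' : Type*}
    (A : Matrix m' m R) (B : Matrix n' n R) (u : m → R) (v : n → R) :
    (A ⊗ₖ B) *ᵥ tensorVec u v = tensorVec (A *ᵥ u) (B *ᵥ v) := by
  ext ⟨i, j⟩
  simp only [mulVec, dotProduct, tensorVec, kroneckerMap_apply, Fintype.sum_prod_type,
    Finset.sum_mul_sum]
  exact Finset.sum_congr rfl fun k _ => Finset.sum_congr rfl fun l _ => by ring

end Tensor

lemma sum_fun_fin_three {α M : Type*} [Fintype α] [AddCommMonoid M] (f : (Fin 3 → α) → M) :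
    ∑ s, f s = ∑ a, ∑ b, ∑ c, f ![a, b, c] := by
  rw [← (Fin.consEquiv fun _ => α).sum_comp, Fintype.sum_prod_type]
  refine Finset.sum_congr rfl fun a _ => ?_
  rw [← (Fin.consEquiv fun _ => α).sum_comp, Fintype.sum_prod_type]
  refine Finset.sum_congr rfl fun b _ => ?_
  rw [← (Fin.consEquiv fun _ => α).sum_comp, Fintype.sum_prod_type]
  refine Finset.sum_congr rfl fun c _ => ?_
  simp only [Finset.univ_unique, Finset.sum_singleton]
  rfl

lemma mul_vecMulVec_star_mul_conjTranspose {R m n : Type*} [Fintype n] [CommSemiring R]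
    [StarRing R] (M : Matrix m n R) (u v : n → R) :
    M * vecMulVec u (star v) * Mᴴ = vecMulVec (M *ᵥ u) (star (M *ᵥ v)) := by
  rw [mul_vecMulVec, vecMulVec_mul, star_mulVec]

lemma sum_vecMulVec_mul_mul_sum_vecMulVec {R ι n : Type*} [CommSemiring R] [Fintype ι]
    [Fintype n] (u v : ι → n → R) (ρ : Matrix n n R) :
    (∑ i, vecMulVec (u i) (v i)) * ρ * (∑ j, vecMulVec (u j) (v j)) =
      ∑ i, ∑ j, (v i ⬝ᵥ ρ *ᵥ u j) • vecMulVec (u i) (v j) := by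
  rw [Finset.sum_mul, Finset.sum_mul]
  refine Finset.sum_congr rfl fun i _ => ?_
  rw [Finset.mul_sum]
  refine Finset.sum_congr rfl fun j _ => ?_
  rw [vecMulVec_mul, vecMulVec_mul_vecMulVec, vecMulVec_smul, dotProduct_mulVec]

def krausMap {R ι n : Type*} [CommSemiring R] [StarRing R] [Fintype ι] [Fintype n]
    (K : ι → Matrix n n R) : Matrix n n R →ₗ[R] Matrix n n R where
  toFun ρ := ∑ i, K i * ρ * (K i)ᴴ
  map_add' ρ σ := by simp only [Matrix.mul_add, Matrix.add_mul, Finset.sum_add_distrib]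
  map_smul' c ρ := by
    simp only [Matrix.mul_smul, Matrix.smul_mul, RingHom.id_apply, Finset.smul_sum]

lemma EAD3_eq_krausMap (γ : ℝ) : EAD3 γ = krausMap (Kr γ) := rfl

lemma ket3_eq_tensorVec (a b c : Fin 2) :
    ket3 a b c = tensorVec (e a) (tensorVec (e b) (e c)) := by
  ext p; simp [ket3, tensorVec, mul_assoc]

@[simp] lemma A0_mulVec_e_zero (γ : ℝ) : A0 γ *ᵥ e 0 = e 0 := by
  ext i; fin_cases i <;> simp [A0, e, mulVec, dotProduct]

@[simp] lemma A0_mulVec_e_one (γ : ℝ) : A0 γ *ᵥ e 1 = Real.sqrt (1 - γ) • e 1 := by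
  ext i; fin_cases i <;> simp [A0, e, mulVec, dotProduct]

@[simp] lemma A1_mulVec_e_zero (γ : ℝ) : A1 γ *ᵥ e 0 = 0 := by
  ext i; fin_cases i <;> simp [A1, e, mulVec, dotProduct]

@[simp] lemma A1_mulVec_e_one (γ : ℝ) : A1 γ *ᵥ e 1 = Real.sqrt γ • e 0 := by
  ext i; fin_cases i <;> simp [A1, e, mulVec, dotProduct]

def codeKet : Fin 3 → Q3 → ℂ := ![ket3 0 0 1, ket3 0 1 0, ket3 1 0 0]

lemma P3_eq_sum_codeKet : P3 = ∑ i, vecMulVec (codeKet i) (star (codeKet i)) := by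
  simp [P3, Fin.sum_univ_three, codeKet]

lemma codeKet_dotProduct_star_codeKet (i j : Fin 3) :
    codeKet i ⬝ᵥ star (codeKet j) = if i = j then 1 else 0 := by
  fin_cases i <;> fin_cases j <;> simp [codeKet, ket3, e, dotProduct, Fintype.sum_prod_type]

lemma EAD3_vecMulVec_codeKet {γ : ℝ} (hγ0 : 0 ≤ γ) (hγ1 : γ ≤ 1) (i j : Fin 3) :
    EAD3 γ (vecMulVec (codeKet i) (star (codeKet j))) =
      (1 - γ) • vecMulVec (codeKet i) (star (codeKet j)) +
        (if i = j then γ else 0) • vecMulVec (ket3 0 0 0) (star (ket3 0 0 0)) := by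
  have h0 : Real.sqrt (1 - γ) * Real.sqrt (1 - γ) = 1 - γ := Real.mul_self_sqrt (by linarith)
  have h1 : Real.sqrt γ * Real.sqrt γ = γ := Real.mul_self_sqrt hγ0
  simp only [EAD3, mul_vecMulVec_star_mul_conjTranspose, sum_fun_fin_three, Fintype.sum_bool, Kr,
    Matrix.cons_val_zero, Matrix.cons_val_one, Matrix.cons_val_two, Matrix.tail_cons,
    Matrix.head_cons, if_true, if_false, Bool.false_eq_true]
  fin_cases i <;> fin_cases j <;>
  simp only [codeKet, Fin.zero_eta, Fin.mk_one, Fin.reduceFinMk, Matrix.cons_val_zero,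
    Matrix.cons_val_one, Matrix.cons_val_two, Matrix.tail_cons, Matrix.head_cons,
    ket3_eq_tensorVec, kroneckerMap_mulVec_tensorVec, A0_mulVec_e_zero, A0_mulVec_e_one,
    A1_mulVec_e_zero, A1_mulVec_e_one, tensorVec_smul_left, tensorVec_smul_right,
    tensorVec_zero_left, tensorVec_zero_right, vecMulVec_zero, star_zero, zero_vecMulVec,
    star_smul, star_trivial, smul_vecMulVec, vecMulVec_smul, smul_smul, smul_zero, h0, h1,
    zero_add, add_zero, Fin.isValue, Fin.reduceEq, one_ne_zero, zero_ne_one, ↓reduceIte,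
    zero_smul] <;>
  abel

theorem EAD3_eq_of_supported {γ : ℝ} (hγ0 : 0 ≤ γ) (hγ1 : γ ≤ 1) {ρ : Matrix Q3 Q3 ℂ}
    (hsupp : P3 * ρ * P3 = ρ) :
    EAD3 γ ρ =
      (1 - γ) • ρ + ((γ : ℂ) * ρ.trace) • vecMulVec (ket3 0 0 0) (star (ket3 0 0 0)) := by
  set c : Fin 3 → Fin 3 → ℂ := fun i j => star (codeKet i) ⬝ᵥ ρ *ᵥ codeKet j
  have hρ : ρ = ∑ i, ∑ j, c i j • vecMulVec (codeKet i) (star (codeKet j)) := by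
    rw [← sum_vecMulVec_mul_mul_sum_vecMulVec, ← P3_eq_sum_codeKet, hsupp]
  have htr : ρ.trace = ∑ i, c i i := by
    conv_lhs => rw [hρ]
    simp [trace_sum, codeKet_dotProduct_star_codeKet]
  calc EAD3 γ ρ = ∑ i, ∑ j, c i j • EAD3 γ (vecMulVec (codeKet i) (star (codeKet j))) := by
        conv_lhs => rw [hρ]
        simp only [EAD3_eq_krausMap, map_sum, map_smul]
    _ = (1 - γ) • ∑ i, ∑ j, c i j • vecMulVec (codeKet i) (star (codeKet j)) +
          ((γ : ℂ) * ∑ i, c i i) • vecMulVec (ket3 0 0 0) (star (ket3 0 0 0)) := by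
        simp only [EAD3_vecMulVec_codeKet hγ0 hγ1, smul_add, Finset.sum_add_distrib,
          Finset.smul_sum, Finset.sum_smul, ite_smul, zero_smul, smul_ite, smul_zero,
          Finset.sum_ite_eq, Finset.mem_univ, if_true, mul_smul, Complex.coe_smul,
          smul_comm (1 - γ), smul_comm γ]
    _ = _ := by rw [← hρ, htr]

theorem qutrit_dualrail_simulates_erasure_general (γ : ℝ) (hγ0 : 0 ≤ γ) (hγ1 : γ ≤ 1)
    (ρ : Matrix Q3 Q3 ℂ) (htr : ρ.trace = 1)
    (hsupp : P3 * ρ * P3 = ρ) :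
    EAD3 γ ρ = ((1 - γ : ℝ) : ℂ) • ρ +
      ((γ : ℝ) : ℂ) • vecMulVec (ket3 0 0 0) (star (ket3 0 0 0)) := by
  rw [EAD3_eq_of_supported hγ0 hγ1 hsupp, htr, mul_one, Complex.coe_smul, Complex.coe_smul]

theorem qutrit_dualrail_simulates_erasure (γ : ℝ) (hγ0 : 0 ≤ γ) (hγ1 : γ ≤ 1)
    (ρ : Matrix Q3 Q3 ℂ) (hρ : ρ.PosSemidef) (htr : ρ.trace = 1)
    (hsupp : P3 * ρ * P3 = ρ) :
    EAD3 γ ρ = ((1 - γ : ℝ) : ℂ) • ρ +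
      ((γ : ℝ) : ℂ) • vecMulVec (ket3 0 0 0) (star (ket3 0 0 0)) :=
  qutrit_dualrail_simulates_erasure_general γ hγ0 hγ1 ρ htr hsupp
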